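/- arXiv:1211.0089 — 7 statements merged into one kernel-verified Lean document; each statement's English description precedes it below -/
import Mathlib

section
/- For all a, b > 0 with a ≠ b, the inequality H(a,b)^α · Q(a,b)^(1-α) < M(a,b) holds if and only if α ≥ 2/9, where the inequality is required for all such a, b. -/
noncomputable def M (a b : ℝ) : ℝ := (a - b) / (2 * Real.arsinh ((a - b) / (a + b)))
noncomputable def H (a b : ℝ) : ℝ := 2 * a * b / (a + b)
noncomputable def Q (a b : ℝ) : ℝ := Real.sqrt ((a ^ 2 + b ^ 2) / 2)

/-! Put `a, b = s (1 ± t)` with `0 < t < 1`. All three means are homogeneous, and at `s = 1`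
they are `H = 1 - t²`, `Q = √(1 + t²)`, `M = t / arsinh t`; so the claim is
`(1 - t²) ^ α * √(1 + t²) ^ (1 - α) < t / arsinh t`, whose left side decreases in `α`
because `H ≤ Q`. Both sides are `1 + c t² + O(t⁴)`, with `c = 1/6` on the right and
`c = 1/2 - 3α/2` on the left, which is why `2/9` is the threshold: below it the inequality
fails for small `t`. At `α = 2/9` the quintic Taylor bound for `arsinh` and Bernoulli's
inequality reduce the claim to a polynomial inequality in `t²`. -/

open Real Set

lemma le_of_hasDerivAt_le_of_eq {f g f' g' : ℝ → ℝ} (hf : ∀ x, HasDerivAt f (f' x) x)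
    (hg : ∀ x, HasDerivAt g (g' x) x) (h0 : f 0 = g 0) (hf'g' : ∀ x, 0 < x → f' x ≤ g' x)
    {t : ℝ} (ht : 0 ≤ t) : f t ≤ g t := by
  have hmono : MonotoneOn (g - f) (Ici 0) := by
    refine monotoneOn_of_deriv_nonneg (convex_Ici 0) (fun x _ ↦ ?_) (fun x _ ↦ ?_)
      fun x hx ↦ ?_
    · exact ((hg x).sub (hf x)).continuousAt.continuousWithinAt
    · exact ((hg x).sub (hf x)).differentiableAt.differentiableWithinAt
    · rw [interior_Ici] at hx
      rw [((hg x).sub (hf x)).deriv, sub_nonneg]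
      exact hf'g' x hx
  have := hmono self_mem_Ici ht ht
  simp only [Pi.sub_apply, h0, sub_self, sub_nonneg] at this
  exact this

namespace Real

lemma sub_cube_div_six_le_arsinh {t : ℝ} (ht : 0 ≤ t) : t - t ^ 3 / 6 ≤ arsinh t := by
  refine le_of_hasDerivAt_le_of_eq (f := fun y ↦ y - y ^ 3 / 6) (f' := fun x ↦ 1 - x ^ 2 / 2)
    (fun x ↦ ?_) hasDerivAt_arsinh (by simp) (fun x _ ↦ ?_) ht
  · exact ((hasDerivAt_id' x).sub ((hasDerivAt_pow 3 x).div_const 6)).congr_deriv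
      (by norm_num; ring)
  · have hsqrt : √(1 + x ^ 2) ≤ 1 + x ^ 2 / 2 :=
      sqrt_le_iff.mpr ⟨by positivity, by nlinarith⟩
    calc 1 - x ^ 2 / 2 ≤ (1 + x ^ 2 / 2)⁻¹ := by
          rw [← one_div, le_div_iff₀ (by positivity)]; nlinarith
      _ ≤ (√(1 + x ^ 2))⁻¹ := inv_anti₀ (by positivity) hsqrt

lemma arsinh_le_sub_cube_div_six_add {t : ℝ} (ht : 0 ≤ t) :
    arsinh t ≤ t - t ^ 3 / 6 + 3 * t ^ 5 / 40 := by
  refine le_of_hasDerivAt_le_of_eq (f' := fun x ↦ (√(1 + x ^ 2))⁻¹)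
    (g := fun y ↦ y - y ^ 3 / 6 + 3 * y ^ 5 / 40) (g' := fun x ↦ 1 - x ^ 2 / 2 + 3 * x ^ 4 / 8)
    hasDerivAt_arsinh (fun x ↦ ?_) (by simp) (fun x _ ↦ ?_) ht
  · exact (((hasDerivAt_id' x).sub ((hasDerivAt_pow 3 x).div_const 6)).add
      (((hasDerivAt_pow 5 x).const_mul 3).div_const 40)).congr_deriv (by norm_num; ring)
  · have hp : 0 < 1 - x ^ 2 / 2 + 3 * x ^ 4 / 8 := by nlinarith [sq_nonneg (x ^ 2 - 2 / 3)]
    have hsq : (1 - x ^ 2 / 2 + 3 * x ^ 4 / 8) ^ 2 * (1 + x ^ 2) - 1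
        = x ^ 6 * ((3 * x ^ 2 - 5 / 2) ^ 2 + 135 / 4) / 64 := by
      ring
    have hone : 1 ≤ √((1 - x ^ 2 / 2 + 3 * x ^ 4 / 8) ^ 2 * (1 + x ^ 2)) :=
      one_le_sqrt.mpr (by rw [← sub_nonneg, hsq]; positivity)
    rw [sqrt_mul' _ (by positivity), sqrt_sq hp.le] at hone
    rw [inv_le_iff_one_le_mul₀ (by positivity)]
    exact hone

lemma one_add_mul_one_sub_inv_le_rpow {w γ : ℝ} (hw : 0 < w) (hγ : 0 ≤ γ) :
    1 + γ * (1 - w⁻¹) ≤ w ^ γ :=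
  calc 1 + γ * (1 - w⁻¹) ≤ 1 + γ * log w := by gcongr; exact one_sub_inv_le_log_of_pos hw
    _ ≤ exp (log w * γ) := by rw [mul_comm]; linarith [add_one_le_exp (log w * γ)]
    _ = w ^ γ := (rpow_def_of_pos hw γ).symm

lemma div_arsinh_abs (t : ℝ) : |t| / arsinh |t| = t / arsinh t := by
  rcases abs_cases t with ⟨h, -⟩ | ⟨h, -⟩ <;> simp [h, arsinh_neg, neg_div_neg_eq]

end Real

lemma antitone_rpow_mul_rpow_one_sub {h q : ℝ} (hh : 0 < h) (hhq : h ≤ q) :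
    Antitone fun α : ℝ ↦ h ^ α * q ^ (1 - α) := by
  have hq : 0 < q := hh.trans_le hhq
  have heq : ∀ α : ℝ, h ^ α * q ^ (1 - α) = q * (h / q) ^ α := fun α ↦ by
    rw [div_rpow hh.le hq.le, rpow_sub hq, rpow_one]; ring
  intro α β hαβ
  simp only [heq]
  exact mul_le_mul_of_nonneg_left
    (rpow_le_rpow_of_exponent_ge (div_pos hh hq) ((div_le_one hq).mpr hhq) hαβ) hq.le

/-- `H(1+t, 1-t) ^ α * Q(1+t, 1-t) ^ (1-α)`, the companion of `M(1+t, 1-t) = t / arsinh t`. -/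
noncomputable def weightedHQ (α t : ℝ) : ℝ := (1 - t ^ 2) ^ α * √(1 + t ^ 2) ^ (1 - α)

lemma antitone_weightedHQ {t : ℝ} (ht : t ^ 2 < 1) : Antitone fun α ↦ weightedHQ α t :=
  antitone_rpow_mul_rpow_one_sub (by linarith) <|
    calc 1 - t ^ 2 ≤ 1 := by linarith [sq_nonneg t]
      _ ≤ √(1 + t ^ 2) := one_le_sqrt.mpr (by linarith [sq_nonneg t])

/- The `t²`-terms cancel at `α = 2/9` (`-1/6 - 2/9 + 7/18 = 0`), so `arsinh` has to be bounded
to order `t⁵`; what is left is `-t⁴` times a negative definite quadratic in `t²`. -/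
lemma weightedHQ_two_ninths_lt {t : ℝ} (ht0 : 0 < t) (ht1 : t < 1) :
    weightedHQ (2 / 9) t < t / arsinh t := by
  have hx1 : t ^ 2 < 1 := by nlinarith
  have hH : (1 - t ^ 2) ^ (2 / 9 : ℝ) ≤ 1 - 2 / 9 * t ^ 2 := by
    simpa [sub_eq_add_neg] using rpow_one_add_le_one_add_mul_self (s := -t ^ 2) (by linarith)
      (p := 2 / 9) (by norm_num) (by norm_num)
  have hQ : √(1 + t ^ 2) ^ (1 - 2 / 9 : ℝ) ≤ 1 + 7 / 18 * t ^ 2 := by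
    rw [sqrt_eq_rpow, ← rpow_mul (by positivity)]
    norm_num
    exact rpow_one_add_le_one_add_mul_self (by linarith [sq_nonneg t]) (by norm_num) (by norm_num)
  have harsinh : arsinh t ≤ t * (1 - t ^ 2 / 6 + 3 * t ^ 4 / 40) :=
    (arsinh_le_sub_cube_div_six_add ht0.le).trans_eq (by ring)
  have hpoly :
      (1 - t ^ 2 / 6 + 3 * t ^ 4 / 40) * ((1 - 2 / 9 * t ^ 2) * (1 + 7 / 18 * t ^ 2)) < 1 := by
    have hexpand :
        (1 - t ^ 2 / 6 + 3 * t ^ 4 / 40) * ((1 - 2 / 9 * t ^ 2) * (1 + 7 / 18 * t ^ 2)) - 1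
          = -t ^ 4 * (126 * (t ^ 2 - 523 / 252) ^ 2 + 110519 / 504) / 19440 := by
      ring
    have : 0 < t ^ 4 * (126 * (t ^ 2 - 523 / 252) ^ 2 + 110519 / 504) := by positivity
    linarith
  have hH0 : 0 ≤ 1 - 2 / 9 * t ^ 2 := by linarith
  rw [lt_div_iff₀ (arsinh_pos_iff.mpr ht0), weightedHQ]
  calc (1 - t ^ 2) ^ (2 / 9 : ℝ) * √(1 + t ^ 2) ^ (1 - 2 / 9 : ℝ) * arsinh t
      ≤ (1 - 2 / 9 * t ^ 2) * (1 + 7 / 18 * t ^ 2) * (t * (1 - t ^ 2 / 6 + 3 * t ^ 4 / 40)) :=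
        mul_le_mul (mul_le_mul hH hQ (by positivity) hH0) harsinh
          (arsinh_nonneg_iff.mpr ht0.le) (mul_nonneg hH0 (by positivity))
    _ < t := by nlinarith

lemma one_le_mul_one_add_mul_one_sub_inv {β x : ℝ} (hβ0 : 0 < β) (hβ : β < 2 / 9)
    (hx : x = 1 / 6 - 3 * β / 4) :
    1 ≤ (1 - x / 6) *
      ((1 + β * (1 - (1 - x)⁻¹)) * (1 + (1 - β) / 2 * (1 - (1 + x)⁻¹))) := by
  have hx0 : 1 - x ≠ 0 := by linarith
  have hx1 : 1 + x ≠ 0 := by linarith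
  have hc : 0 < 105 / 128 - 131 * β / 256 + 13 * β ^ 2 / 64 + 9 * β ^ 3 / 256 := by nlinarith
  have hexpand :
      (1 - x / 6) * ((1 + β * (1 - (1 - x)⁻¹)) * (1 + (1 - β) / 2 * (1 - (1 + x)⁻¹))) - 1
        = (β - 2 / 9) ^ 2 * (105 / 128 - 131 * β / 256 + 13 * β ^ 2 / 64 + 9 * β ^ 3 / 256)
          / ((1 - x) * (1 + x)) := by
    field_simp
    rw [hx]; ring
  rw [← sub_nonneg, hexpand]
  exact div_nonneg (mul_nonneg (sq_nonneg _) hc.le) (mul_pos (by linarith) (by linarith)).le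

/- For `β < 2/9` the side `t / arsinh t` has the smaller `t²`-coefficient; the witness
`t² = 1/6 - 3β/4` (half of the gap `1/3 - 3β/2`) is small enough for first-order bounds to
see this. -/
lemma exists_div_arsinh_le_weightedHQ {β : ℝ} (hβ0 : 0 < β) (hβ : β < 2 / 9) :
    ∃ t, 0 < t ∧ t < 1 ∧ t / arsinh t ≤ weightedHQ β t := by
  obtain ⟨x, hx⟩ : ∃ x : ℝ, x = 1 / 6 - 3 * β / 4 := ⟨_, rfl⟩
  have hx0 : 0 < x := by linarith
  have ht0 : 0 < √x := sqrt_pos.mpr hx0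
  refine ⟨√x, ht0, (sqrt_lt' one_pos).mpr (by linarith), ?_⟩
  rw [div_le_iff₀ (arsinh_pos_iff.mpr ht0), weightedHQ, sq_sqrt hx0.le]
  have harsinh : √x * (1 - x / 6) ≤ arsinh √x := by
    convert sub_cube_div_six_le_arsinh ht0.le using 1
    rw [pow_succ, sq_sqrt hx0.le]; ring
  have hA0 : 0 ≤ 1 + β * (1 - (1 - x)⁻¹) := by
    have : (1 - x)⁻¹ ≤ 2 := inv_le_of_inv_le₀ (by norm_num) (by linarith)
    nlinarith
  have hB0 : 0 ≤ 1 + (1 - β) / 2 * (1 - (1 + x)⁻¹) := by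
    have : (1 + x)⁻¹ ≤ 1 := inv_le_one_of_one_le₀ (by linarith)
    nlinarith
  set A := 1 + β * (1 - (1 - x)⁻¹)
  set B := 1 + (1 - β) / 2 * (1 - (1 + x)⁻¹)
  have hA : A ≤ (1 - x) ^ β := one_add_mul_one_sub_inv_le_rpow (by linarith) hβ0.le
  have hB : B ≤ √(1 + x) ^ (1 - β) := by
    rw [sqrt_eq_rpow, ← rpow_mul (by linarith), one_div_mul_eq_div]
    exact one_add_mul_one_sub_inv_le_rpow (by linarith) (by linarith)
  calc √x ≤ √x * ((1 - x / 6) * (A * B)) :=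
        le_mul_of_one_le_right ht0.le (one_le_mul_one_add_mul_one_sub_inv hβ0 hβ hx)
    _ = √x * (1 - x / 6) * (A * B) := (mul_assoc _ _ _).symm
    _ ≤ arsinh √x * ((1 - x) ^ β * √(1 + x) ^ (1 - β)) :=
        mul_le_mul harsinh (mul_le_mul hA hB hB0 (rpow_nonneg (by linarith) _))
          (mul_nonneg hA0 hB0) (arsinh_nonneg_iff.mpr ht0.le)
    _ = _ := by ring

lemma forall_weightedHQ_lt_div_arsinh_iff (α : ℝ) :
    (∀ t, 0 < t → t < 1 → weightedHQ α t < t / arsinh t) ↔ 2 / 9 ≤ α := by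
  refine ⟨fun h ↦ ?_, fun hα t ht0 ht1 ↦ ?_⟩
  · by_contra! hα
    obtain ⟨t, ht0, ht1, hle⟩ := exists_div_arsinh_le_weightedHQ
      (lt_max_of_lt_right (by norm_num : (0 : ℝ) < 1 / 9)) (max_lt hα (by norm_num))
    have hanti := antitone_weightedHQ (t := t) (by nlinarith) (le_max_left α (1 / 9))
    exact (h t ht0 ht1).not_ge (hle.trans hanti)
  · exact (antitone_weightedHQ (by nlinarith) hα).trans_lt (weightedHQ_two_ninths_lt ht0 ht1)

section Means

variable {a b : ℝ}

lemma H_eq_mul (h : a + b ≠ 0) : H a b = (a + b) / 2 * (1 - ((a - b) / (a + b)) ^ 2) := by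
  unfold H; field_simp; ring

lemma Q_eq_mul (h : 0 < a + b) : Q a b = (a + b) / 2 * √(1 + ((a - b) / (a + b)) ^ 2) := by
  rw [Q, ← sqrt_sq (by positivity : 0 ≤ (a + b) / 2), ← sqrt_mul (sq_nonneg _)]
  congr 1
  field_simp
  ring

lemma M_eq_mul (h : a + b ≠ 0) :
    M a b = (a + b) / 2 * ((a - b) / (a + b) / arsinh ((a - b) / (a + b))) := by
  rw [M, ← mul_div_mul_comm, mul_div_cancel₀ _ h]

lemma H_rpow_mul_Q_rpow_eq_mul (ha : 0 < a) (hb : 0 < b) (α : ℝ) :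
    H a b ^ α * Q a b ^ (1 - α) = (a + b) / 2 * weightedHQ α ((a - b) / (a + b)) := by
  have hs : 0 < (a + b) / 2 := by positivity
  have ht : ((a - b) / (a + b)) ^ 2 ≤ 1 := by
    rw [div_pow, div_le_one (by positivity)]; nlinarith
  rw [H_eq_mul (by positivity), Q_eq_mul (by positivity), mul_rpow hs.le (by linarith),
    mul_rpow hs.le (sqrt_nonneg _), mul_mul_mul_comm, ← rpow_add hs, add_sub_cancel, rpow_one,
    weightedHQ]

lemma forall_H_rpow_mul_Q_rpow_lt_M_iff (α : ℝ) :
    (∀ a b : ℝ, 0 < a → 0 < b → a ≠ b → H a b ^ α * Q a b ^ (1 - α) < M a b) ↔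
      ∀ t, 0 < t → t < 1 → weightedHQ α t < t / arsinh t := by
  refine ⟨fun h t ht0 ht1 ↦ ?_, fun h a b ha hb hab ↦ ?_⟩
  · have := h (1 + t) (1 - t) (by linarith) (by linarith) (by intro; linarith)
    rwa [H_rpow_mul_Q_rpow_eq_mul (by linarith) (by linarith), M_eq_mul (by linarith),
      show (1 + t + (1 - t)) / 2 = 1 by ring,
      show (1 + t - (1 - t)) / (1 + t + (1 - t)) = t by ring, one_mul, one_mul] at this
  · have hab0 : 0 < a + b := by positivity
    have ht0 : 0 < |(a - b) / (a + b)| :=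
      abs_pos.mpr (div_ne_zero (sub_ne_zero.mpr hab) hab0.ne')
    have ht1 : |(a - b) / (a + b)| < 1 := by
      rw [abs_div, abs_of_pos hab0, div_lt_one hab0, abs_sub_lt_iff]; constructor <;> linarith
    have := h _ ht0 ht1
    rw [weightedHQ, sq_abs, div_arsinh_abs] at this
    rw [H_rpow_mul_Q_rpow_eq_mul ha hb, M_eq_mul hab0.ne', weightedHQ]
    exact mul_lt_mul_of_pos_left this (by positivity)

end Means

theorem stmt0 (α : ℝ) :
    (∀ a b : ℝ, 0 < a → 0 < b → a ≠ b →
      H a b ^ α * Q a b ^ (1 - α) < M a b) ↔ 2 / 9 ≤ α :=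
  (forall_H_rpow_mul_Q_rpow_lt_M_iff α).trans (forall_weightedHQ_lt_div_arsinh_iff α)
end

section
/- For all a, b > 0 with a ≠ b, M(a,b) < H(a,b)^β · Q(a,b)^(1-β) holds for all such a, b if and only if β ≤ 0; in particular M(a,b) < Q(a,b). -/
/-!
Put `t = (a - b) / (a + b)`. Then `M a b = (a + b) / 2 * (t / arsinh t)` and
`Q a b = (a + b) / 2 * √(1 + t ^ 2)`, so `M < Q` becomes `tanh u < u` for `u = arsinh t`.
Since `H ≤ Q`, for `β ≤ 0` we get `H ^ β * Q ^ (1 - β) ≥ Q > M`. For `β > 0` the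
right-hand side at `(1, b)` tends to `0` as `b → 0⁺` (because `H 1 b → 0`), while
`M 1 b → M 1 0 > 0`.
-/

open Real Filter Topology

lemma Real.sinh_lt_mul_cosh {u : ℝ} (hu : 0 < u) : sinh u < u * cosh u := by
  have hmono : StrictMonoOn (fun x => x * cosh x - sinh x) (Set.Ici 0) := by
    refine strictMonoOn_of_deriv_pos (convex_Ici 0) (by fun_prop) fun x hx => ?_
    rw [interior_Ici] at hx
    have hderiv : HasDerivAt (fun x => x * cosh x - sinh x) (x * sinh x) x := by
      refine (((hasDerivAt_id' x).mul (hasDerivAt_cosh x)).sub (hasDerivAt_sinh x)).congr_deriv ?_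
      ring
    rw [hderiv.deriv]
    exact mul_pos hx (sinh_pos_iff.mpr hx)
  simpa using hmono Set.self_mem_Ici hu.le hu

lemma Real.div_arsinh_lt_sqrt_one_add_sq {t : ℝ} (ht : t ≠ 0) :
    t / arsinh t < √(1 + t ^ 2) := by
  wlog htpos : 0 < t generalizing t
  · have := this (neg_ne_zero.mpr ht) (neg_pos.mpr ((not_lt.mp htpos).lt_of_ne ht))
    rwa [arsinh_neg, neg_div_neg_eq, neg_sq] at this
  have hu : 0 < arsinh t := arsinh_pos_iff.mpr htpos
  have := sinh_lt_mul_cosh hu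
  rw [sinh_arsinh, cosh_arsinh] at this
  rw [div_lt_iff₀ hu]
  linarith

lemma M_eq_mul_div_arsinh {a b : ℝ} (hs : a + b ≠ 0) :
    M a b = (a + b) / 2 * ((a - b) / (a + b) / arsinh ((a - b) / (a + b))) := by
  unfold M
  field_simp

lemma Q_eq_mul_sqrt_one_add_sq {a b : ℝ} (hs : 0 < a + b) :
    Q a b = (a + b) / 2 * √(1 + ((a - b) / (a + b)) ^ 2) := by
  unfold Q
  rw [← sqrt_sq (by positivity : 0 ≤ (a + b) / 2), ← sqrt_mul (sq_nonneg _)]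
  congr 1
  field_simp
  ring

theorem M_lt_Q {a b : ℝ} (ha : 0 < a) (hb : 0 < b) (hab : a ≠ b) : M a b < Q a b := by
  have hs : 0 < a + b := by positivity
  rw [M_eq_mul_div_arsinh hs.ne', Q_eq_mul_sqrt_one_add_sq hs]
  exact mul_lt_mul_of_pos_left
    (div_arsinh_lt_sqrt_one_add_sq (div_ne_zero (sub_ne_zero.mpr hab) hs.ne')) (by positivity)

lemma H_le_Q {a b : ℝ} (ha : 0 < a) (hb : 0 < b) : H a b ≤ Q a b := by
  calc H a b ≤ (a + b) / 2 := by
        unfold H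
        rw [div_le_iff₀ (by positivity)]
        nlinarith [sq_nonneg (a - b)]
    _ ≤ Q a b := by
        unfold Q
        rw [le_sqrt (by positivity) (by positivity)]
        nlinarith [sq_nonneg (a - b)]

lemma H_pos {a b : ℝ} (ha : 0 < a) (hb : 0 < b) : 0 < H a b := by
  unfold H; positivity

lemma Q_pos {a b : ℝ} (ha : a ≠ 0) : 0 < Q a b := by
  unfold Q; positivity

lemma M_pos {a b : ℝ} (hs : 0 < a + b) (hab : a ≠ b) : 0 < M a b := by
  unfold M
  rcases hab.lt_or_gt with h | h
  · exact div_pos_of_neg_of_neg (by linarith) <| mul_neg_of_pos_of_neg two_pos <|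
      arsinh_neg_iff.mpr (div_neg_of_neg_of_pos (by linarith) hs)
  · exact div_pos (by linarith) <| mul_pos two_pos <| arsinh_pos_iff.mpr (div_pos (by linarith) hs)

lemma continuousAt_M_right {a b : ℝ} (hs : a + b ≠ 0) (hab : a ≠ b) :
    ContinuousAt (M a) b := by
  have harsinh : 2 * arsinh ((a - b) / (a + b)) ≠ 0 := by
    simpa [arsinh_eq_zero_iff, sub_eq_zero, hs] using hab
  unfold M
  exact (continuousAt_const.sub continuousAt_id).div
    (continuousAt_const.mul (continuous_arsinh.continuousAt.comp
      ((continuousAt_const.sub continuousAt_id).div (continuousAt_const.add continuousAt_id) hs)))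
    harsinh

lemma le_rpow_mul_rpow_one_sub {h q β : ℝ} (hh : 0 < h) (hhq : h ≤ q) (hβ : β ≤ 0) :
    q ≤ h ^ β * q ^ (1 - β) := by
  have hq : 0 < q := hh.trans_le hhq
  calc q = q ^ β * q ^ (1 - β) := by rw [← rpow_add hq, add_sub_cancel, rpow_one]
    _ ≤ h ^ β * q ^ (1 - β) :=
      mul_le_mul_of_nonneg_right (rpow_le_rpow_of_nonpos hh hhq hβ) (rpow_nonneg hq.le _)

theorem exists_H_rpow_mul_Q_rpow_le_M {β : ℝ} (hβ : 0 < β) :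
    ∃ a b : ℝ, 0 < a ∧ 0 < b ∧ a ≠ b ∧ H a b ^ β * Q a b ^ (1 - β) ≤ M a b := by
  set g : ℝ → ℝ := fun b => H 1 b ^ β * Q 1 b ^ (1 - β) - M 1 b
  have hg0 : g 0 < 0 := by
    simp only [g, H, mul_zero, zero_div, zero_rpow hβ.ne', zero_mul, zero_sub, neg_lt_zero]
    exact M_pos (by norm_num) one_ne_zero
  have hH : ContinuousAt (H 1) 0 := by
    unfold H
    exact (continuousAt_const.mul continuousAt_id).div (continuousAt_const.add continuousAt_id)
      (by norm_num)
  have hQ : ContinuousAt (Q 1) 0 := by unfold Q; fun_prop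
  have hg : ContinuousAt g 0 :=
    ((hH.rpow_const (Or.inr hβ.le)).mul (hQ.rpow_const (Or.inl (Q_pos one_ne_zero).ne'))).sub
      (continuousAt_M_right (by norm_num) one_ne_zero)
  have hneg : ∀ᶠ b in 𝓝[>] 0, g b < 0 ∧ b ∈ Set.Ioo 0 1 :=
    (eventually_nhdsWithin_of_eventually_nhds (hg.eventually (gt_mem_nhds hg0))).and
      (Ioo_mem_nhdsGT one_pos)
  obtain ⟨b, hgb, hb0, hb1⟩ := hneg.exists
  exact ⟨1, b, one_pos, hb0, hb1.ne', (sub_neg.mp hgb).le⟩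

theorem stmt1 :
    (∀ β : ℝ, (∀ a b : ℝ, 0 < a → 0 < b → a ≠ b →
      M a b < H a b ^ β * Q a b ^ (1 - β)) ↔ β ≤ 0) ∧
    (∀ a b : ℝ, 0 < a → 0 < b → a ≠ b → M a b < Q a b) := by
  refine ⟨fun β => ⟨fun hall => ?_, fun hβ a b ha hb hab => ?_⟩,
    fun a b ha hb hab => M_lt_Q ha hb hab⟩
  · by_contra! hβ
    obtain ⟨a, b, ha, hb, hab, hle⟩ := exists_H_rpow_mul_Q_rpow_le_M hβ
    exact (hall a b ha hb hab).not_ge hle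
  · exact (M_lt_Q ha hb hab).trans_le (le_rpow_mul_rpow_one_sub (H_pos ha hb) (H_le_Q ha hb) hβ)
end

section
/- For all a, b > 0 with a ≠ b, G(a,b)^(5/9) · C(a,b)^(4/9) < M(a,b) < C(a,b), and these bounds are sharp: G^α C^(1-α) < M for all a ≠ b iff α ≥ 5/9, and M < G^β C^(1-β) for all a ≠ b iff β ≤ 0. -/
noncomputable def G (a b : ℝ) : ℝ := Real.sqrt (a * b)
noncomputable def C (a b : ℝ) : ℝ := (a ^ 2 + b ^ 2) / (a + b)

/-!
The three means are symmetric and homogeneous of degree one, and at `(1 + t, 1 - t)` they equal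
`√(1 - t²)`, `1 + t²` and `t / arsinh t`, so every claim is an inequality in one variable
`t ∈ (0, 1)`. Since `√(1 - t²) < 1 + t²`, the weighted mean `G^α C^(1-α)` decreases in `α`,
which reduces both equivalences to the extreme exponents.

The bound at `α = 5/9` is `arsinh t < t (1 - t²)^(-5/18) (1 + t²)^(-4/9)`. Comparing derivatives
and putting `s = t²` turns it into `(1 - s)^(23/18) (1 + s)^(17/18) < (9 - 3s + 4s²)/9`, whose
logarithmic derivative is an explicit positive rational function.

Sharpness: as `t → 0`, `t / arsinh t = 1 + t²/6 + O(t⁴)` while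
`G^α C^(1-α) = 1 + (1 - 3α/2) t² + O(t⁴)`, and `1 - 3α/2 = 1/6` exactly at `α = 5/9`;
as `t → 1`, `G → 0` while `M` stays above the arithmetic mean.
-/

open Real Set

lemma lt_of_hasDerivAt_pos {f f' : ℝ → ℝ} {a b : ℝ} (hab : a < b)
    (hf : ∀ x ∈ Icc a b, HasDerivAt f (f' x) x) (hf' : ∀ x ∈ Ioo a b, 0 < f' x) :
    f a < f b := by
  refine strictMonoOn_of_hasDerivWithinAt_pos (f' := f') (convex_Icc a b)
    (fun x hx ↦ (hf x hx).continuousAt.continuousWithinAt) (fun x hx ↦ ?_) (fun x hx ↦ ?_)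
    (left_mem_Icc.2 hab.le) (right_mem_Icc.2 hab.le) hab
  · rw [interior_Icc] at hx
    exact (hf x (Ioo_subset_Icc_self hx)).hasDerivWithinAt
  · rw [interior_Icc] at hx
    exact hf' x hx

lemma mul_rpow_mul_mul_rpow_one_sub {s x y : ℝ} (hs : 0 ≤ s) (hx : 0 ≤ x) (hy : 0 ≤ y)
    (α : ℝ) :
    (s * x) ^ α * (s * y) ^ (1 - α) = s * (x ^ α * y ^ (1 - α)) := by
  rw [mul_rpow hs hx, mul_rpow hs hy, mul_mul_mul_comm, ← rpow_add' hs (by norm_num),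
    add_sub_cancel, rpow_one]

lemma antitone_rpow_mul_rpow_one_sub_s4 {g c : ℝ} (hg : 0 < g) (hgc : g ≤ c) :
    Antitone fun α : ℝ ↦ g ^ α * c ^ (1 - α) := by
  have hc : 0 < c := hg.trans_le hgc
  have h : ∀ α : ℝ, g ^ α * c ^ (1 - α) = c * (g / c) ^ α := fun α ↦ by
    rw [rpow_sub hc, rpow_one, div_rpow hg.le hc.le]; ring
  intro α α' hαα'
  simp only [h]
  exact mul_le_mul_of_nonneg_left
    (rpow_le_rpow_of_exponent_ge (div_pos hg hc) ((div_le_one hc).2 hgc) hαα') hc.le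

lemma G_comm (a b : ℝ) : G a b = G b a := by rw [G, G, mul_comm]

lemma C_comm (a b : ℝ) : C a b = C b a := by rw [C, C, add_comm a, add_comm (a ^ 2)]

lemma M_comm (a b : ℝ) : M a b = M b a := by
  rw [M, M, ← neg_sub a b, add_comm b, neg_div (a + b) (a - b), arsinh_neg, mul_neg,
    neg_div_neg_eq]

lemma G_mul_mul {s : ℝ} (hs : 0 ≤ s) (a b : ℝ) : G (s * a) (s * b) = s * G a b := by
  rw [G, G, mul_mul_mul_comm, ← sq, sqrt_mul (sq_nonneg s), sqrt_sq hs]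

lemma C_mul_mul (s a b : ℝ) : C (s * a) (s * b) = s * C a b := by
  rcases eq_or_ne s 0 with rfl | hs
  · simp [C]
  rw [C, C, mul_pow, mul_pow, ← mul_add, ← mul_add, sq, mul_assoc, mul_div_mul_left _ _ hs,
    mul_div_assoc]

lemma M_mul_mul (s a b : ℝ) : M (s * a) (s * b) = s * M a b := by
  rcases eq_or_ne s 0 with rfl | hs
  · simp [M]
  rw [M, M, ← mul_sub, ← mul_add, mul_div_mul_left _ _ hs, mul_div_assoc]

lemma G_one_add_one_sub (t : ℝ) : G (1 + t) (1 - t) = √(1 - t ^ 2) := by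
  rw [G]; ring_nf

lemma C_one_add_one_sub (t : ℝ) : C (1 + t) (1 - t) = 1 + t ^ 2 := by
  rw [C]; ring

lemma M_one_add_one_sub (t : ℝ) : M (1 + t) (1 - t) = t / arsinh t := by
  rw [M]; ring_nf

lemma forall_pos_ne_iff_forall_Ioo {P : ℝ → ℝ → Prop} (hsymm : ∀ a b, P a b → P b a)
    (hscale : ∀ s > 0, ∀ a b, 0 < a → 0 < b → P a b → P (s * a) (s * b)) :
    (∀ a b, 0 < a → 0 < b → a ≠ b → P a b) ↔ ∀ t ∈ Ioo (0 : ℝ) 1, P (1 + t) (1 - t) := by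
  refine ⟨fun h t ht ↦ h _ _ (by linarith [ht.1]) (by linarith [ht.2]) (by linarith [ht.1]),
    fun h a b ha hb hab ↦ ?_⟩
  wlog hba : b < a generalizing a b
  · exact hsymm _ _ (this b a hb ha hab.symm (hab.lt_or_gt.resolve_right hba))
  have hs : 0 < a + b := by linarith
  have ht : (a - b) / (a + b) ∈ Ioo (0 : ℝ) 1 :=
    ⟨div_pos (by linarith) hs, (div_lt_one hs).2 (by linarith)⟩
  convert hscale ((a + b) / 2) (by positivity) _ _ (by linarith [ht.1]) (by linarith [ht.2])
    (h _ ht) using 1 <;> field_simp <;> ring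

lemma G_mul_mul_rpow_mul_C_mul_mul_rpow {s a b : ℝ} (hs : 0 ≤ s) (ha : 0 ≤ a) (hb : 0 ≤ b)
    (α : ℝ) : G (s * a) (s * b) ^ α * C (s * a) (s * b) ^ (1 - α) =
      s * (G a b ^ α * C a b ^ (1 - α)) := by
  rw [G_mul_mul hs, C_mul_mul]
  exact mul_rpow_mul_mul_rpow_one_sub hs (sqrt_nonneg _)
    (div_nonneg (by positivity) (by linarith)) α

lemma forall_G_rpow_mul_C_rpow_lt_M_iff (α : ℝ) :
    (∀ a b : ℝ, 0 < a → 0 < b → a ≠ b → G a b ^ α * C a b ^ (1 - α) < M a b) ↔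
      ∀ t ∈ Ioo (0 : ℝ) 1, √(1 - t ^ 2) ^ α * (1 + t ^ 2) ^ (1 - α) < t / arsinh t := by
  rw [forall_pos_ne_iff_forall_Ioo (fun a b h ↦ by rwa [G_comm, C_comm, M_comm])
    fun s hs a b ha hb h ↦ ?_]
  · simp only [G_one_add_one_sub, C_one_add_one_sub, M_one_add_one_sub]
  · rw [G_mul_mul_rpow_mul_C_mul_mul_rpow hs.le ha.le hb.le, M_mul_mul]
    exact mul_lt_mul_of_pos_left h hs

lemma forall_M_lt_G_rpow_mul_C_rpow_iff (β : ℝ) :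
    (∀ a b : ℝ, 0 < a → 0 < b → a ≠ b → M a b < G a b ^ β * C a b ^ (1 - β)) ↔
      ∀ t ∈ Ioo (0 : ℝ) 1, t / arsinh t < √(1 - t ^ 2) ^ β * (1 + t ^ 2) ^ (1 - β) := by
  rw [forall_pos_ne_iff_forall_Ioo (fun a b h ↦ by rwa [G_comm, C_comm, M_comm])
    fun s hs a b ha hb h ↦ ?_]
  · simp only [G_one_add_one_sub, C_one_add_one_sub, M_one_add_one_sub]
  · rw [G_mul_mul_rpow_mul_C_mul_mul_rpow hs.le ha.le hb.le, M_mul_mul]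
    exact mul_lt_mul_of_pos_left h hs

lemma one_sub_rpow_mul_one_add_rpow_lt {t : ℝ} (ht₀ : 0 < t) (ht₁ : t < 1) :
    (1 - t) ^ (23 / 18 : ℝ) * (1 + t) ^ (17 / 18 : ℝ) < (9 - 3 * t + 4 * t ^ 2) / 9 := by
  have hq : ∀ y : ℝ, 0 < 9 - 3 * y + 4 * y ^ 2 := fun y ↦ by nlinarith [sq_nonneg (y - 3 / 8)]
  let h : ℝ → ℝ := fun y ↦
    log (9 - 3 * y + 4 * y ^ 2) - 23 / 18 * log (1 - y) - 17 / 18 * log (1 + y)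
  have hderiv : ∀ y ∈ Icc 0 t, HasDerivAt h (y * (486 - 42 * y + 16 * y ^ 2) /
      (18 * (1 - y) * (1 + y) * (9 - 3 * y + 4 * y ^ 2))) y := by
    intro y hy
    have h₁ : 1 - y ≠ 0 := by linarith [hy.2]
    have h₂ : 1 + y ≠ 0 := by linarith [hy.1]
    have hq' : HasDerivAt (fun y : ℝ ↦ 9 - 3 * y + 4 * y ^ 2) (-3 + 8 * y) y := by
      refine ((((hasDerivAt_id' y).const_mul 3).const_sub 9).add
        ((hasDerivAt_pow 2 y).const_mul 4)).congr_deriv ?_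
      norm_num
      ring
    refine (((hq'.log (hq y).ne').sub
      ((((hasDerivAt_id' y).const_sub 1).log h₁).const_mul _)).sub
      ((((hasDerivAt_id' y).const_add 1).log h₂).const_mul _)).congr_deriv ?_
    set q := 9 - 3 * y + 4 * y ^ 2 with hq_def
    have : q ≠ 0 := (hq y).ne'
    field_simp
    rw [hq_def]
    ring
  have hlog := lt_of_hasDerivAt_pos ht₀ hderiv fun y hy ↦
    div_pos (mul_pos hy.1 (by nlinarith [hy.1, hy.2]))
      (mul_pos (by nlinarith [hy.1, hy.2]) (hq y))
  have h₁ : 0 < 1 - t := by linarith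
  have h₂ : 0 < 1 + t := by linarith
  norm_num [h] at hlog
  rw [← log_lt_log_iff (by positivity) (div_pos (hq t) (by norm_num)), log_mul (by positivity)
    (by positivity), log_rpow h₁, log_rpow h₂, log_div (hq t).ne' (by norm_num)]
  linarith

lemma hasDerivAt_mul_one_sub_sq_rpow_mul_one_add_sq_rpow {x : ℝ} (hx : x ^ 2 < 1) :
    HasDerivAt (fun y ↦ y * (1 - y ^ 2) ^ (-5 / 18 : ℝ) * (1 + y ^ 2) ^ (-4 / 9 : ℝ))
      ((1 - x ^ 2) ^ (-23 / 18 : ℝ) * (1 + x ^ 2) ^ (-13 / 9 : ℝ) *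
        ((9 - 3 * x ^ 2 + 4 * (x ^ 2) ^ 2) / 9)) x := by
  have hA : 0 < 1 - x ^ 2 := by linarith
  have hB : 0 < 1 + x ^ 2 := by positivity
  have dA : HasDerivAt (fun y ↦ (1 - y ^ 2) ^ (-5 / 18 : ℝ))
      (-(2 * x) * (-5 / 18) * (1 - x ^ 2) ^ (-5 / 18 - 1 : ℝ)) x := by
    simpa using ((hasDerivAt_pow 2 x).const_sub 1).rpow_const (p := -5 / 18) (Or.inl hA.ne')
  have dB : HasDerivAt (fun y ↦ (1 + y ^ 2) ^ (-4 / 9 : ℝ))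
      (2 * x * (-4 / 9) * (1 + x ^ 2) ^ (-4 / 9 - 1 : ℝ)) x := by
    simpa using ((hasDerivAt_pow 2 x).const_add 1).rpow_const (p := -4 / 9) (Or.inl hB.ne')
  refine (((hasDerivAt_id' x).mul dA).mul dB).congr_deriv ?_
  have eA : (1 - x ^ 2) ^ (-5 / 18 : ℝ) = (1 - x ^ 2) * (1 - x ^ 2) ^ (-23 / 18 : ℝ) := by
    rw [← rpow_one_add' hA.le (by norm_num)]; norm_num
  have eB : (1 + x ^ 2) ^ (-4 / 9 : ℝ) = (1 + x ^ 2) * (1 + x ^ 2) ^ (-13 / 9 : ℝ) := by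
    rw [← rpow_one_add' hB.le (by norm_num)]; norm_num
  simp only [Pi.mul_apply]
  rw [show (-5 / 18 - 1 : ℝ) = -23 / 18 by norm_num,
    show (-4 / 9 - 1 : ℝ) = -13 / 9 by norm_num, eA, eB]
  ring

lemma inv_sqrt_one_add_sq_lt {x : ℝ} (hx₀ : x ≠ 0) (hx₁ : x ^ 2 < 1) :
    (√(1 + x ^ 2))⁻¹ < (1 - x ^ 2) ^ (-23 / 18 : ℝ) * (1 + x ^ 2) ^ (-13 / 9 : ℝ) *
      ((9 - 3 * x ^ 2 + 4 * (x ^ 2) ^ 2) / 9) := by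
  have hA : 0 < 1 - x ^ 2 := by linarith
  have hB : 0 < 1 + x ^ 2 := by positivity
  calc (√(1 + x ^ 2))⁻¹
      = (1 - x ^ 2) ^ (-23 / 18 : ℝ) * (1 + x ^ 2) ^ (-13 / 9 : ℝ) *
          ((1 - x ^ 2) ^ (23 / 18 : ℝ) * (1 + x ^ 2) ^ (17 / 18 : ℝ)) := by
        rw [mul_mul_mul_comm, ← rpow_add hA, ← rpow_add hB, sqrt_eq_rpow, ← rpow_neg hB.le]
        norm_num
    _ < _ := mul_lt_mul_of_pos_left
        (one_sub_rpow_mul_one_add_rpow_lt (by positivity) hx₁) (by positivity)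

lemma arsinh_lt_mul_one_sub_sq_rpow_mul_one_add_sq_rpow {x : ℝ} (hx₀ : 0 < x) (hx₁ : x < 1) :
    arsinh x < x * (1 - x ^ 2) ^ (-5 / 18 : ℝ) * (1 + x ^ 2) ^ (-4 / 9 : ℝ) := by
  have h := lt_of_hasDerivAt_pos hx₀
    (fun y hy ↦ (hasDerivAt_mul_one_sub_sq_rpow_mul_one_add_sq_rpow
      (by nlinarith [hy.1, hy.2])).sub (hasDerivAt_arsinh y))
    (fun y hy ↦ sub_pos.2 (inv_sqrt_one_add_sq_lt hy.1.ne' (by nlinarith [hy.1, hy.2])))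
  simpa using h

lemma sqrt_one_sub_sq_rpow_mul_one_add_sq_rpow_lt_div_arsinh {x : ℝ} (hx₀ : 0 < x)
    (hx₁ : x < 1) :
    √(1 - x ^ 2) ^ (5 / 9 : ℝ) * (1 + x ^ 2) ^ (4 / 9 : ℝ) < x / arsinh x := by
  have hA : 0 < 1 - x ^ 2 := by nlinarith
  have hB : 0 < 1 + x ^ 2 := by positivity
  rw [lt_div_iff₀ (arsinh_pos_iff.2 hx₀), sqrt_eq_rpow, ← rpow_mul hA.le]
  calc (1 - x ^ 2) ^ (1 / 2 * (5 / 9) : ℝ) * (1 + x ^ 2) ^ (4 / 9 : ℝ) * arsinh x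
      < (1 - x ^ 2) ^ (5 / 18 : ℝ) * (1 + x ^ 2) ^ (4 / 9 : ℝ) *
          (x * (1 - x ^ 2) ^ (-5 / 18 : ℝ) * (1 + x ^ 2) ^ (-4 / 9 : ℝ)) := by
        rw [show (1 / 2 * (5 / 9) : ℝ) = 5 / 18 by norm_num]
        exact mul_lt_mul_of_pos_left (arsinh_lt_mul_one_sub_sq_rpow_mul_one_add_sq_rpow hx₀ hx₁)
          (by positivity)
    _ = x * ((1 - x ^ 2) ^ (5 / 18 : ℝ) * (1 - x ^ 2) ^ (-5 / 18 : ℝ)) *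
          ((1 + x ^ 2) ^ (4 / 9 : ℝ) * (1 + x ^ 2) ^ (-4 / 9 : ℝ)) := by ring
    _ = x := by rw [← rpow_add hA, ← rpow_add hB]; norm_num

lemma one_sub_sq_div_two_lt_inv_sqrt_one_add_sq {y : ℝ} (hy : y ≠ 0) :
    1 - y ^ 2 / 2 < (√(1 + y ^ 2))⁻¹ := by
  have hs : 0 < √(1 + y ^ 2) := sqrt_pos.2 (by positivity)
  rw [← one_div, lt_div_iff₀ hs]
  rcases le_or_gt (1 - y ^ 2 / 2) 0 with h | h
  · nlinarith
  refine lt_of_pow_lt_pow_left₀ 2 zero_le_one ?_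
  rw [mul_pow, sq_sqrt (by positivity)]
  have hy2 : 0 < y ^ 2 := by positivity
  nlinarith [mul_pos (pow_pos hy2 2) (by linarith : 0 < 3 - y ^ 2)]

lemma sub_pow_three_div_six_lt_arsinh {x : ℝ} (hx : 0 < x) : x - x ^ 3 / 6 < arsinh x := by
  have h := lt_of_hasDerivAt_pos hx
    (fun y _ ↦ (hasDerivAt_arsinh y).sub (((hasDerivAt_id' y).sub
      ((hasDerivAt_pow 3 y).div_const 6))))
    (fun y hy ↦ by
      have := one_sub_sq_div_two_lt_inv_sqrt_one_add_sq hy.1.ne'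
      norm_num
      linarith)
  simpa using h

lemma arsinh_lt_self {x : ℝ} (hx : 0 < x) : arsinh x < x := by
  simpa using self_lt_sinh_iff.2 (arsinh_pos_iff.2 hx)

lemma div_arsinh_lt_one_add_sq {x : ℝ} (hx₀ : 0 < x) (hx₁ : x < 1) :
    x / arsinh x < 1 + x ^ 2 := by
  rw [div_lt_iff₀ (arsinh_pos_iff.2 hx₀)]
  nlinarith [mul_lt_mul_of_pos_left (sub_pow_three_div_six_lt_arsinh hx₀)
    (by positivity : 0 < 1 + x ^ 2), mul_pos (pow_pos hx₀ 3) (by nlinarith : 0 < 5 - x ^ 2)]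

lemma exists_div_arsinh_le_of_lt_five_div_nine {α : ℝ} (hα₀ : 0 ≤ α) (hα : α < 5 / 9) :
    ∃ t ∈ Ioo (0 : ℝ) 1, t / arsinh t ≤ √(1 - t ^ 2) ^ α * (1 + t ^ 2) ^ (1 - α) := by
  -- `u = t²`; the gap `(3/2)(5/9 - α) u` between the `t²` coefficients absorbs the `u²` errors.
  set u := min (5 / 9 - α) (1 / 8)
  have hu : 0 < u := lt_min (by linarith) (by norm_num)
  have hu₈ : u ≤ 1 / 8 := min_le_right _ _
  have huα : u ≤ 5 / 9 - α := min_le_left _ _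
  have ht : 0 < √u := sqrt_pos.2 hu
  refine ⟨√u, ⟨ht, (sqrt_lt' one_pos).2 (by linarith)⟩, ?_⟩
  rw [sq_sqrt hu.le]
  have hM : √u / arsinh √u ≤ 1 + u / 6 + u ^ 2 / 12 := by
    have h := sub_pow_three_div_six_lt_arsinh ht
    rw [pow_succ, sq_sqrt hu.le] at h
    have hK : 1 ≤ (1 + u / 6 + u ^ 2 / 12) * (1 - u / 6) := by nlinarith
    rw [div_le_iff₀ (arsinh_pos_iff.2 ht)]
    nlinarith [mul_le_mul_of_nonneg_left h.le (by positivity : 0 ≤ 1 + u / 6 + u ^ 2 / 12),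
      mul_le_mul_of_nonneg_left hK ht.le]
  have hlog₁ : -u - 8 / 7 * u ^ 2 ≤ log (1 - u) := by
    have h := one_sub_inv_le_log_of_pos (by linarith : 0 < 1 - u)
    have : (1 - u)⁻¹ ≤ 1 + u + 8 / 7 * u ^ 2 := by
      rw [inv_eq_one_div, div_le_iff₀ (by linarith)]; nlinarith
    linarith
  have hlog₂ : u - u ^ 2 ≤ log (1 + u) := by
    have h := one_sub_inv_le_log_of_pos (by linarith : 0 < 1 + u)
    have : (1 + u)⁻¹ ≤ 1 - u + u ^ 2 := by
      rw [inv_eq_one_div, div_le_iff₀ (by linarith)]; nlinarith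
    linarith
  have hW : √(1 - u) ^ α * (1 + u) ^ (1 - α) =
      exp (log (1 - u) / 2 * α + log (1 + u) * (1 - α)) := by
    rw [rpow_def_of_pos (sqrt_pos.2 (by linarith)), rpow_def_of_pos (by linarith), log_sqrt
      (by linarith), exp_add]
  rw [hW]
  refine hM.trans (le_trans ?_ (add_one_le_exp _))
  nlinarith [mul_le_mul_of_nonneg_right hlog₁ hα₀,
    mul_le_mul_of_nonneg_right hlog₂ (by linarith : 0 ≤ 1 - α),
    mul_le_mul_of_nonneg_left huα hu.le, mul_nonneg hα₀ (sq_nonneg u)]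

lemma exists_rpow_mul_rpow_le_div_arsinh_of_pos {β : ℝ} (hβ : 0 < β) :
    ∃ t ∈ Ioo (0 : ℝ) 1, √(1 - t ^ 2) ^ β * (1 + t ^ 2) ^ (1 - β) ≤ t / arsinh t := by
  set g : ℝ := (1 / 2) ^ β⁻¹
  have hg₀ : 0 < g := rpow_pos_of_pos (by norm_num) _
  have hg₁ : g < 1 := rpow_lt_one (by norm_num) (by norm_num) (inv_pos.2 hβ)
  have ht : 0 < √(1 - g ^ 2) := sqrt_pos.2 (by nlinarith)
  refine ⟨√(1 - g ^ 2), ⟨ht, (sqrt_lt' one_pos).2 (by nlinarith)⟩, ?_⟩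
  rw [sq_sqrt (by nlinarith), sub_sub_cancel, sqrt_sq hg₀.le, rpow_inv_rpow (by norm_num) hβ.ne']
  have hC : (1 + (1 - g ^ 2)) ^ (1 - β) ≤ 2 := calc
    (1 + (1 - g ^ 2)) ^ (1 - β) ≤ (1 + (1 - g ^ 2)) ^ (1 : ℝ) :=
      rpow_le_rpow_of_exponent_le (by nlinarith) (by linarith)
    _ ≤ 2 := by rw [rpow_one]; nlinarith
  have hM : 1 < √(1 - g ^ 2) / arsinh √(1 - g ^ 2) :=
    (one_lt_div (arsinh_pos_iff.2 ht)).2 (arsinh_lt_self ht)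
  linarith

lemma antitone_sqrt_one_sub_sq_rpow_mul_one_add_sq_rpow {t : ℝ} (ht : t ∈ Ioo (0 : ℝ) 1) :
    Antitone fun α : ℝ ↦ √(1 - t ^ 2) ^ α * (1 + t ^ 2) ^ (1 - α) :=
  antitone_rpow_mul_rpow_one_sub_s4 (sqrt_pos.2 (by nlinarith [ht.1, ht.2]))
    ((sqrt_le_one.2 (by nlinarith)).trans (by nlinarith))

lemma forall_rpow_mul_rpow_lt_div_arsinh_iff (α : ℝ) :
    (∀ t ∈ Ioo (0 : ℝ) 1, √(1 - t ^ 2) ^ α * (1 + t ^ 2) ^ (1 - α) < t / arsinh t) ↔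
      5 / 9 ≤ α := by
  refine ⟨fun h ↦ ?_, fun hα t ht ↦ ?_⟩
  · by_contra! hα
    obtain ⟨t, ht, hle⟩ :=
      exists_div_arsinh_le_of_lt_five_div_nine (le_max_right α 0) (max_lt hα (by norm_num))
    exact (hle.trans (antitone_sqrt_one_sub_sq_rpow_mul_one_add_sq_rpow ht
      (le_max_left α 0))).not_gt (h t ht)
  · calc _ ≤ √(1 - t ^ 2) ^ (5 / 9 : ℝ) * (1 + t ^ 2) ^ (1 - 5 / 9 : ℝ) :=
          antitone_sqrt_one_sub_sq_rpow_mul_one_add_sq_rpow ht hα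
      _ < t / arsinh t := by
          rw [show (1 - 5 / 9 : ℝ) = 4 / 9 by norm_num]
          exact sqrt_one_sub_sq_rpow_mul_one_add_sq_rpow_lt_div_arsinh ht.1 ht.2

lemma forall_div_arsinh_lt_rpow_mul_rpow_iff (β : ℝ) :
    (∀ t ∈ Ioo (0 : ℝ) 1, t / arsinh t < √(1 - t ^ 2) ^ β * (1 + t ^ 2) ^ (1 - β)) ↔
      β ≤ 0 := by
  refine ⟨fun h ↦ ?_, fun hβ t ht ↦ ?_⟩
  · by_contra! hβ
    obtain ⟨t, ht, hle⟩ := exists_rpow_mul_rpow_le_div_arsinh_of_pos hβ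
    exact hle.not_gt (h t ht)
  · calc t / arsinh t < 1 + t ^ 2 := div_arsinh_lt_one_add_sq ht.1 ht.2
      _ = √(1 - t ^ 2) ^ (0 : ℝ) * (1 + t ^ 2) ^ (1 - 0 : ℝ) := by simp
      _ ≤ _ := antitone_sqrt_one_sub_sq_rpow_mul_one_add_sq_rpow ht hβ

theorem stmt4 :
    (∀ a b : ℝ, 0 < a → 0 < b → a ≠ b →
      G a b ^ ((5 : ℝ) / 9) * C a b ^ ((4 : ℝ) / 9) < M a b ∧ M a b < C a b) ∧
    (∀ α : ℝ, (∀ a b : ℝ, 0 < a → 0 < b → a ≠ b →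
      G a b ^ α * C a b ^ (1 - α) < M a b) ↔ 5 / 9 ≤ α) ∧
    (∀ β : ℝ, (∀ a b : ℝ, 0 < a → 0 < b → a ≠ b →
      M a b < G a b ^ β * C a b ^ (1 - β)) ↔ β ≤ 0) := by
  have lower : ∀ α : ℝ, (∀ a b : ℝ, 0 < a → 0 < b → a ≠ b →
      G a b ^ α * C a b ^ (1 - α) < M a b) ↔ 5 / 9 ≤ α := fun α ↦
    (forall_G_rpow_mul_C_rpow_lt_M_iff α).trans (forall_rpow_mul_rpow_lt_div_arsinh_iff α)
  have upper : ∀ β : ℝ, (∀ a b : ℝ, 0 < a → 0 < b → a ≠ b →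
      M a b < G a b ^ β * C a b ^ (1 - β)) ↔ β ≤ 0 := fun β ↦
    (forall_M_lt_G_rpow_mul_C_rpow_iff β).trans (forall_div_arsinh_lt_rpow_mul_rpow_iff β)
  refine ⟨fun a b ha hb hab ↦ ⟨?_, ?_⟩, lower, upper⟩
  · have h := (lower (5 / 9)).2 le_rfl a b ha hb hab
    rwa [show (1 - 5 / 9 : ℝ) = 4 / 9 by norm_num] at h
  · simpa using (upper 0).2 le_rfl a b ha hb hab
end

section
/- The function φ(t) = [3 - cosh(2t)]·[sinh(2t) - 2t] / (2t·sinh²(t)·[5 + cosh(2t)]) is strictly decreasing on the interval (0, log(1+√2)). -/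
/-!
With `s = sinh t`, `c = cosh t`, the double-angle formulas factor the function as
`(1 - s²) / (3 + s²) · (s c - t) / (t s²)`. The first factor is strictly decreasing in `s² ≥ 0`
and positive while `s < 1`, i.e. while `t < arsinh 1 = log (1 + √2)`. The second factor is
positive and decreasing on `(0, ∞)`: its derivative is `-(s² c + s t - 2 c t²) / (t² s³)`, and
`s² c + s t - 2 c t² > 0` because its derivative `3 c (s c - t) - 2 s t²` is positive by
`s c - t > 2 t³ / 3` and `s < t c`.
-/

open Real Set

theorem StrictAntiOn.mul_antitoneOn_of_pos {α R : Type*} [Preorder α] [Semiring R]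
    [PartialOrder R] [IsStrictOrderedRing R] {f g : α → R} {s : Set α} (hf : StrictAntiOn f s)
    (hg : AntitoneOn g s) (hf₀ : ∀ x ∈ s, 0 < f x) (hg₀ : ∀ x ∈ s, 0 < g x) :
    StrictAntiOn (fun x => f x * g x) s := fun _ ha _ hb hab =>
  mul_lt_mul (hf ha hb hab) (hg ha hb hab.le) (hg₀ _ hb) (hf₀ _ ha).le

theorem pos_of_hasDerivAt_of_deriv_pos {F F' : ℝ → ℝ} (hF : ∀ x, HasDerivAt F (F' x) x)
    (h₀ : F 0 = 0) (hF' : ∀ x, 0 < x → 0 < F' x) {t : ℝ} (ht : 0 < t) : 0 < F t := by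
  have hmono : StrictMonoOn F (Ici 0) :=
    strictMonoOn_of_deriv_pos (convex_Ici 0) (fun x _ => (hF x).continuousAt.continuousWithinAt)
      fun x hx => by
        rw [interior_Ici] at hx
        exact (hF x).deriv ▸ hF' x hx
  simpa [h₀] using hmono self_mem_Ici ht.le ht

namespace Real

variable {t : ℝ}

theorem sinh_lt_mul_cosh_s5 (ht : 0 < t) : sinh t < t * cosh t := by
  have hF := pos_of_hasDerivAt_of_deriv_pos (F := fun x => x * cosh x - sinh x)
    (F' := fun x => x * sinh x)
    (fun x => (((hasDerivAt_id' x).fun_mul (hasDerivAt_cosh x)).fun_sub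
      (hasDerivAt_sinh x)).congr_deriv (by ring))
    (by simp) (fun x hx => mul_pos hx (sinh_pos_iff.mpr hx)) ht
  linarith

theorem two_mul_pow_three_div_three_lt_sinh_mul_cosh_sub (ht : 0 < t) :
    2 * t ^ 3 / 3 < sinh t * cosh t - t := by
  have hF := pos_of_hasDerivAt_of_deriv_pos (F := fun x => sinh x * cosh x - x - 2 * x ^ 3 / 3)
    (F' := fun x => 2 * (sinh x ^ 2 - x ^ 2))
    (fun x => by
      refine ((((hasDerivAt_sinh x).fun_mul (hasDerivAt_cosh x)).fun_sub (hasDerivAt_id' x)).fun_sub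
        (((hasDerivAt_pow 3 x).const_mul 2).div_const 3)).congr_deriv ?_
      push_cast
      linear_combination cosh_sq x)
    (by simp) (fun x hx => by
      have hs := self_lt_sinh_iff.mpr hx
      nlinarith) ht
  linarith

theorem two_mul_cosh_mul_sq_lt_sinh_sq_mul_cosh_add (ht : 0 < t) :
    2 * cosh t * t ^ 2 < sinh t ^ 2 * cosh t + sinh t * t := by
  have hF := pos_of_hasDerivAt_of_deriv_pos
    (F := fun x => sinh x ^ 2 * cosh x + sinh x * x - 2 * cosh x * x ^ 2)
    (F' := fun x => 3 * cosh x * (sinh x * cosh x - x) - 2 * sinh x * x ^ 2)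
    (fun x => by
      refine (((((hasDerivAt_sinh x).fun_pow 2).fun_mul (hasDerivAt_cosh x)).fun_add
        ((hasDerivAt_sinh x).fun_mul (hasDerivAt_id' x))).fun_sub
        (((hasDerivAt_cosh x).const_mul 2).fun_mul (hasDerivAt_pow 2 x))).congr_deriv ?_
      push_cast
      linear_combination (-sinh x) * cosh_sq x)
    (by simp) (fun x hx => by
      have h₁ := two_mul_pow_three_div_three_lt_sinh_mul_cosh_sub hx
      have h₂ := sinh_lt_mul_cosh_s5 hx
      have hc := cosh_pos x
      nlinarith [mul_lt_mul_of_pos_left h₁ hc, pow_pos hx 2]) ht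
  linarith

theorem hasDerivAt_sinh_mul_cosh_sub_div (ht : t ≠ 0) :
    HasDerivAt (fun x => (sinh x * cosh x - x) / (x * sinh x ^ 2))
      (-(sinh t ^ 2 * cosh t + sinh t * t - 2 * cosh t * t ^ 2) / (t ^ 2 * sinh t ^ 3)) t := by
  have hs : sinh t ≠ 0 := sinh_ne_zero.mpr ht
  refine ((((hasDerivAt_sinh t).fun_mul (hasDerivAt_cosh t)).fun_sub (hasDerivAt_id' t)).fun_div
    ((hasDerivAt_id' t).fun_mul ((hasDerivAt_sinh t).fun_pow 2)) (by positivity)).congr_deriv ?_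
  field_simp
  push_cast
  linear_combination (-sinh t ^ 2 * t) * cosh_sq t

theorem strictAntiOn_sinh_mul_cosh_sub_div :
    StrictAntiOn (fun x => (sinh x * cosh x - x) / (x * sinh x ^ 2)) (Ioi 0) :=
  strictAntiOn_of_deriv_neg (convex_Ioi 0)
    (fun x hx => (hasDerivAt_sinh_mul_cosh_sub_div (ne_of_gt hx)).continuousAt.continuousWithinAt)
    fun x hx => by
      rw [interior_Ioi] at hx
      rw [(hasDerivAt_sinh_mul_cosh_sub_div (ne_of_gt hx)).deriv]
      exact div_neg_of_neg_of_pos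
        (neg_neg_of_pos (sub_pos.mpr (two_mul_cosh_mul_sq_lt_sinh_sq_mul_cosh_add hx)))
        (mul_pos (pow_pos hx 2) (pow_pos (sinh_pos_iff.mpr hx) 3))

theorem strictAntiOn_one_sub_sinh_sq_div :
    StrictAntiOn (fun x => (1 - sinh x ^ 2) / (3 + sinh x ^ 2)) (Ici 0) := by
  intro a ha b hb hab
  have hsq : sinh a ^ 2 < sinh b ^ 2 := by
    have ha₀ := sinh_nonneg_iff.mpr (mem_Ici.mp ha)
    gcongr
    exact sinh_lt_sinh.mpr hab
  rw [div_lt_div_iff₀ (by positivity) (by positivity)]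
  linarith

theorem three_sub_cosh_two_mul_mul_div_eq (t : ℝ) :
    (1 - sinh t ^ 2) / (3 + sinh t ^ 2) * ((sinh t * cosh t - t) / (t * sinh t ^ 2)) =
      (3 - cosh (2 * t)) * (sinh (2 * t) - 2 * t) / (2 * t * sinh t ^ 2 * (5 + cosh (2 * t))) := by
  rw [sinh_two_mul, cosh_two_mul, cosh_sq, div_mul_div_comm,
    show (3 - (sinh t ^ 2 + 1 + sinh t ^ 2)) * (2 * sinh t * cosh t - 2 * t)
      = 4 * ((1 - sinh t ^ 2) * (sinh t * cosh t - t)) by ring,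
    show 2 * t * sinh t ^ 2 * (5 + (sinh t ^ 2 + 1 + sinh t ^ 2))
      = 4 * ((3 + sinh t ^ 2) * (t * sinh t ^ 2)) by ring]
  exact (mul_div_mul_left _ _ four_ne_zero).symm

end Real

theorem stmt5 :
    StrictAntiOn
      (fun t : ℝ => (3 - Real.cosh (2 * t)) * (Real.sinh (2 * t) - 2 * t) /
        (2 * t * Real.sinh t ^ 2 * (5 + Real.cosh (2 * t))))
      (Set.Ioo 0 (Real.log (1 + Real.sqrt 2))) := by
  have hend : log (1 + √2) = arsinh 1 := by norm_num [arsinh]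
  rw [hend]
  refine StrictAntiOn.congr ?_ fun t _ => three_sub_cosh_two_mul_mul_div_eq t
  refine (strictAntiOn_one_sub_sinh_sq_div.mono (Ioo_subset_Ioi_self.trans Ioi_subset_Ici_self)
    |>.mul_antitoneOn_of_pos
      (strictAntiOn_sinh_mul_cosh_sub_div.mono Ioo_subset_Ioi_self).antitoneOn ?_ ?_)
  · rintro t ⟨ht₀, ht₁⟩
    have hs₁ : sinh t < 1 := by simpa [sinh_arsinh] using sinh_lt_sinh.mpr ht₁
    have hs₀ : 0 < sinh t := sinh_pos_iff.mpr ht₀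
    apply div_pos <;> nlinarith
  · rintro t ⟨ht₀, -⟩
    have hnum := two_mul_pow_three_div_three_lt_sinh_mul_cosh_sub ht₀
    have hs₀ : 0 < sinh t := sinh_pos_iff.mpr ht₀
    apply div_pos <;> [nlinarith [pow_pos ht₀ 3]; positivity]
end

section
/- For all x ∈ (0,1), log(1+x²) - log(x/arsinh(x)) > 0; equivalently, x/arsinh(x) < 1 + x² for x ∈ (0,1). -/
/-!
With `g y = (1 + y²) arsinh y - y` we have `g 0 = 0` and
`g' y = 2 y arsinh y + √(1 + y²) - 1 > 0` for `y > 0`, so `g` is positive on `(0, ∞)`,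
i.e. `x / arsinh x < 1 + x²`; the logarithmic form follows since `log` is increasing.
-/

namespace Real

theorem hasDerivAt_one_add_sq_mul_arsinh_sub_self (y : ℝ) :
    HasDerivAt (fun y => (1 + y ^ 2) * arsinh y - y)
      (2 * y * arsinh y + √(1 + y ^ 2) - 1) y := by
  have hsq : HasDerivAt (fun y : ℝ => 1 + y ^ 2) (2 * y) y := by
    simpa using (hasDerivAt_pow 2 y).const_add 1
  have h := (hsq.mul (hasDerivAt_arsinh y)).sub (hasDerivAt_id y)
  rwa [← div_eq_mul_inv, div_sqrt] at h

theorem strictMonoOn_one_add_sq_mul_arsinh_sub_self :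
    StrictMonoOn (fun y => (1 + y ^ 2) * arsinh y - y) (Set.Ici 0) := by
  refine strictMonoOn_of_deriv_pos (convex_Ici 0) (by fun_prop) fun y hy => ?_
  rw [interior_Ici, Set.mem_Ioi] at hy
  rw [(hasDerivAt_one_add_sq_mul_arsinh_sub_self y).deriv]
  have harsinh : 0 < arsinh y := arsinh_pos_iff.mpr hy
  have hsqrt : 1 ≤ √(1 + y ^ 2) := one_le_sqrt.mpr (by nlinarith)
  nlinarith

theorem self_lt_one_add_sq_mul_arsinh {x : ℝ} (hx : 0 < x) : x < (1 + x ^ 2) * arsinh x := by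
  have := strictMonoOn_one_add_sq_mul_arsinh_sub_self Set.self_mem_Ici hx.le hx
  simp only [arsinh_zero, mul_zero, sub_zero] at this
  linarith

theorem self_div_arsinh_lt_one_add_sq {x : ℝ} (hx : 0 < x) : x / arsinh x < 1 + x ^ 2 :=
  (div_lt_iff₀ (arsinh_pos_iff.mpr hx)).mpr (self_lt_one_add_sq_mul_arsinh hx)

end Real

theorem stmt7 (x : ℝ) (hx : x ∈ Set.Ioo (0 : ℝ) 1) :
    0 < Real.log (1 + x ^ 2) - Real.log (x / Real.arsinh x) ∧
    x / Real.arsinh x < 1 + x ^ 2 := by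
  have hlt := Real.self_div_arsinh_lt_one_add_sq hx.1
  have hpos : 0 < x / Real.arsinh x := div_pos hx.1 (Real.arsinh_pos_iff.mpr hx.1)
  exact ⟨sub_pos.mpr (Real.log_lt_log hpos hlt), hlt⟩
end

section
/- For all x ∈ (0,1), x·(49x² - 3)·sqrt(1+x²) + (3 + 7x² + 20x⁴)·arsinh(x) > 0. -/
/-!
Put `s = √(1 + x²)`. The bound `sinh t ≤ t cosh t` for `t ≥ 0` (the derivative of `t cosh t - sinh t`
is `t sinh t ≥ 0`) becomes `x ≤ s · arsinh x` at `t = arsinh x`. Multiplying the expression by `s`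
and using this bound on the `arsinh` term leaves `x (49x² - 3)(1 + x²) + (3 + 7x² + 20x⁴) x
= x (53x² + 69x⁴) > 0`.
-/

open Real

theorem Real.sinh_le_mul_cosh {y : ℝ} (hy : 0 ≤ y) : sinh y ≤ y * cosh y := by
  have hderiv (t : ℝ) : HasDerivAt (fun t => t * cosh t - sinh t) (t * sinh t) t := by
    have h : HasDerivAt (fun t => t * cosh t - sinh t) (1 * cosh t + t * sinh t - cosh t) t :=
      ((hasDerivAt_id' t).mul (hasDerivAt_cosh t)).sub (hasDerivAt_sinh t)
    rwa [one_mul, add_sub_cancel_left] at h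
  have hmono : Monotone fun t => t * cosh t - sinh t :=
    monotone_of_deriv_nonneg (fun t => (hderiv t).differentiableAt) fun t => by
      rw [(hderiv t).deriv]
      rcases le_total 0 t with ht | ht
      · exact mul_nonneg ht (sinh_nonneg_iff.mpr ht)
      · exact mul_nonneg_of_nonpos_of_nonpos ht (sinh_nonpos_iff.mpr ht)
  simpa using hmono hy

theorem Real.le_sqrt_one_add_sq_mul_arsinh {x : ℝ} (hx : 0 ≤ x) :
    x ≤ √(1 + x ^ 2) * arsinh x := by
  simpa only [sinh_arsinh, cosh_arsinh, mul_comm] using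
    sinh_le_mul_cosh (arsinh_nonneg_iff.mpr hx)

theorem stmt9 (x : ℝ) (hx : x ∈ Set.Ioo (0 : ℝ) 1) :
    0 < x * (49 * x ^ 2 - 3) * Real.sqrt (1 + x ^ 2) +
      (3 + 7 * x ^ 2 + 20 * x ^ 4) * Real.arsinh x := by
  set s := √(1 + x ^ 2)
  have hx0 : 0 < x := hx.1
  have hs : 0 < s := by positivity
  have hs2 : s ^ 2 = 1 + x ^ 2 := sq_sqrt (by positivity)
  refine pos_of_mul_pos_right (a := s) ?_ hs.le
  calc 0 < x * (53 * x ^ 2 + 69 * x ^ 4) := by positivity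
    _ = x * (49 * x ^ 2 - 3) * s ^ 2 + (3 + 7 * x ^ 2 + 20 * x ^ 4) * x := by rw [hs2]; ring
    _ ≤ x * (49 * x ^ 2 - 3) * s ^ 2 + (3 + 7 * x ^ 2 + 20 * x ^ 4) * (s * arsinh x) := by
      gcongr; exact le_sqrt_one_add_sq_mul_arsinh hx0.le
    _ = s * (x * (49 * x ^ 2 - 3) * s + (3 + 7 * x ^ 2 + 20 * x ^ 4) * arsinh x) := by ring
end

section
/- The function 3·sinh(2t) - 6t + 2t·cosh(2t) - (1/2)·sinh(4t) has the power series expansion Σ_{n≥1} [2^(2n+1)·(2n+4-2^(2n))/(2n+1)!]·t^(2n+1) for all real t. -/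
/-!
With `x = 2t` the function is `3 sinh x + x cosh x - sinh (2x) / 2`. Multiplying the cosh series
by `x` turns `x^(2n) / (2n)!` into `(2n+1) x^(2n+1) / (2n+1)!`, so all three series are odd and
the coefficient of `x^(2n+1) / (2n+1)!` is `3 + (2n+1) - 2^(2n)`. The `n = 0` term is `6t`,
which is why it is moved to the left-hand side.
-/

open Nat

lemma mul_pow_div_factorial {K : Type*} [Field K] [CharZero K] (x : K) (k : ℕ) :
    x * (x ^ k / k !) = (k + 1) * (x ^ (k + 1) / (k + 1)!) := by
  rw [factorial_succ]
  push_cast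
  field_simp
  ring

lemma Real.hasSum_mul_cosh (x : ℝ) :
    HasSum (fun n : ℕ => (2 * n + 1) * (x ^ (2 * n + 1) / (2 * n + 1)!)) (x * Real.cosh x) := by
  refine ((Real.hasSum_cosh x).mul_left x).congr_fun fun n => ?_
  rw [mul_pow_div_factorial]
  push_cast
  ring

lemma Real.hasSum_three_sinh_add_mul_cosh_sub_sinh_two_mul (x : ℝ) :
    HasSum (fun n : ℕ => (2 * n + 4 - 2 ^ (2 * n)) * (x ^ (2 * n + 1) / (2 * n + 1)!))
      (3 * Real.sinh x + x * Real.cosh x - 1 / 2 * Real.sinh (2 * x)) := by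
  refine ((((Real.hasSum_sinh x).mul_left 3).add (Real.hasSum_mul_cosh x)).sub
    ((Real.hasSum_sinh (2 * x)).mul_left (1 / 2))).congr_fun fun n => ?_
  ring

theorem stmt11 (t : ℝ) :
    HasSum
      (fun n : ℕ =>
        2 ^ (2 * (n + 1) + 1) * ((2 * (n + 1) + 4 : ℝ) - 2 ^ (2 * (n + 1))) /
          (Nat.factorial (2 * (n + 1) + 1)) * t ^ (2 * (n + 1) + 1))
      (3 * Real.sinh (2 * t) - 6 * t + 2 * t * Real.cosh (2 * t) -
        (1 / 2) * Real.sinh (4 * t)) := by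
  have h := (hasSum_nat_add_iff' 1).2
    (Real.hasSum_three_sinh_add_mul_cosh_sub_sinh_two_mul (2 * t))
  simp only [Finset.sum_range_one, CharP.cast_eq_zero, mul_zero, zero_add, pow_zero, pow_one,
    factorial_one, cast_one, div_one, show (4 : ℝ) - 1 = 3 by norm_num,
    show 2 * (2 * t) = 4 * t by ring] at h
  rw [show 3 * Real.sinh (2 * t) - 6 * t + 2 * t * Real.cosh (2 * t) - 1 / 2 * Real.sinh (4 * t)
    = 3 * Real.sinh (2 * t) + 2 * t * Real.cosh (2 * t) - 1 / 2 * Real.sinh (4 * t) - 3 * (2 * t)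
    by ring]
  exact h.congr_fun fun n => by push_cast; ring
end
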